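/- arXiv:2503.16626 — 2 statements merged into one kernel-verified Lean document; each statement's English description precedes it below -/
import Mathlib

section
/- Let f : X → Y and g : Y → Z be fully closed surjections between compact Hausdorff spaces such that the composition g ∘ f is also fully closed, and let M ⊆ Z. Then the mapping p^M_g ∘ f : X → Z^M_g is fully closed. -/
open Set Topology

/-- The small image `f^#(A) := Y \ f(X \ A)`. -/
def smallImage {X Y : Type*} (f : X → Y) (A : Set X) : Set Y := (f '' Aᶜ)ᶜ

/-- `f` is fully closed at `y` if for every finite open cover `U₁, …, Uₛ` of `f⁻¹(y)`,
the set `{y} ∪ ⋃ᵢ f^#(Uᵢ)` is a neighborhood of `y`. -/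
def FullyClosedAt {X Y : Type*} [TopologicalSpace X] [TopologicalSpace Y]
    (f : X → Y) (y : Y) : Prop :=
  ∀ (s : ℕ) (U : Fin s → Set X), (∀ i, IsOpen (U i)) → (f ⁻¹' {y} ⊆ ⋃ i, U i) →
    ({y} ∪ ⋃ i, smallImage f (U i)) ∈ nhds y

/-- A continuous surjection is fully closed if it is fully closed at every point. -/
def FullyClosed {X Y : Type*} [TopologicalSpace X] [TopologicalSpace Y] (f : X → Y) : Prop :=
  Continuous f ∧ Function.Surjective f ∧ ∀ y, FullyClosedAt f y

/-- The equivalence relation on `Y` whose classes are the singletons inside `g⁻¹(M)`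
and the whole fibers `g⁻¹(z)` for `z ∉ M`; its quotient is the space `Z^M_g` and the
quotient map `Quotient.mk` is `p^M_g`. -/
def fiberSetoid {Y Z : Type*} (g : Y → Z) (M : Set Z) : Setoid Y where
  r y y' := y = y' ∨ (g y = g y' ∧ g y ∉ M)
  iseqv := by
    constructor
    · exact fun x => Or.inl rfl
    · rintro x y (rfl | ⟨h1, h2⟩)
      · exact Or.inl rfl
      · exact Or.inr ⟨h1.symm, h1 ▸ h2⟩
    · rintro x y z (rfl | ⟨h1, h2⟩) h
      · exact h
      · rcases h with rfl | ⟨h3, h4⟩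
        · exact Or.inr ⟨h1, h2⟩
        · exact Or.inr ⟨h1.trans h3, h2⟩

/-- A map satisfying the (pointwise) full closedness condition sends disjoint closed
sets to sets with finite intersection. -/
lemma fc_finite_inter {X Z : Type} [TopologicalSpace X] [CompactSpace X]
    [TopologicalSpace Z] [CompactSpace Z] [T2Space Z] {φ : X → Z} (hc : Continuous φ)
    (hat : ∀ z, FullyClosedAt φ z)
    {F₁ F₂ : Set X} (h₁ : IsClosed F₁) (h₂ : IsClosed F₂)
    (hd : ∀ x, x ∈ F₁ → x ∉ F₂) :
    (φ '' F₁ ∩ φ '' F₂).Finite := by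
  have hcm : IsClosedMap φ := hc.isClosedMap
  have hEc : IsClosed (φ '' F₁ ∩ φ '' F₂) := (hcm _ h₁).inter (hcm _ h₂)
  have key : ∀ v ∈ φ '' F₁ ∩ φ '' F₂, ∃ O : Set Z, IsOpen O ∧ v ∈ O ∧
      ∀ u ∈ O ∩ (φ '' F₁ ∩ φ '' F₂), u = v := by
    intro v _
    have hcov : φ ⁻¹' {v} ⊆ ⋃ i : Fin 2, (![F₁ᶜ, F₂ᶜ]) i := by
      intro x _
      by_cases hx1 : x ∈ F₁
      · exact mem_iUnion.2 ⟨1, hd x hx1⟩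
      · exact mem_iUnion.2 ⟨0, hx1⟩
    have hN := hat v 2 ![F₁ᶜ, F₂ᶜ] (by
        intro i
        fin_cases i
        · simpa using h₁.isOpen_compl
        · simpa using h₂.isOpen_compl) hcov
    obtain ⟨O, hOsub, hOopen, hvO⟩ := mem_nhds_iff.mp hN
    refine ⟨O, hOopen, hvO, ?_⟩
    rintro u ⟨huO, hu1, hu2⟩
    rcases hOsub huO with h | h
    · exact h
    · exfalso
      rw [mem_iUnion] at h
      obtain ⟨i, hi⟩ := h
      fin_cases i
      · have : u ∉ φ '' F₁ := by simpa [smallImage, compl_compl] using hi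
        exact this hu1
      · have : u ∉ φ '' F₂ := by simpa [smallImage, compl_compl] using hi
        exact this hu2
  choose O hOopen hmem hsmall using key
  have hcpt : IsCompact (φ '' F₁ ∩ φ '' F₂) := hEc.isCompact
  obtain ⟨t, ht⟩ := hcpt.elim_finite_subcover
      (fun v : ↥(φ '' F₁ ∩ φ '' F₂) => O v v.2)
      (fun v => hOopen v v.2)
      (fun u hu => mem_iUnion.2 ⟨⟨u, hu⟩, hmem u hu⟩)
  refine Set.Finite.subset (Set.Finite.image Subtype.val t.finite_toSet) ?_
  intro u hu
  have h2 := ht hu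
  rw [mem_iUnion₂] at h2
  obtain ⟨v, hvt, hvO⟩ := h2
  exact ⟨v, hvt, (hsmall v v.2 u ⟨hvO, hu⟩).symm⟩

/-- Let `f : X → Y` and `g : Y → Z` be fully closed surjections between compact Hausdorff
spaces such that `g ∘ f` is also fully closed, and let `M ⊆ Z`. Then the mapping
`p^M_g ∘ f : X → Z^M_g` is fully closed. -/
theorem stmt8 {X Y Z : Type} [TopologicalSpace X] [CompactSpace X] [T2Space X]
    [TopologicalSpace Y] [CompactSpace Y] [T2Space Y]
    [TopologicalSpace Z] [CompactSpace Z] [T2Space Z]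
    (f : X → Y) (g : Y → Z) (hf : FullyClosed f) (hg : FullyClosed g)
    (hgf : FullyClosed (g ∘ f)) (M : Set Z) :
    FullyClosed ((Quotient.mk (fiberSetoid g M)) ∘ f) := by
  obtain ⟨hfc, hfs, hff⟩ := hf
  obtain ⟨hgc, hgs, hgg⟩ := hg
  obtain ⟨hgfc, hgfs, hgff⟩ := hgf
  have hfcm : IsClosedMap f := hfc.isClosedMap
  have hgcm : IsClosedMap g := hgc.isClosedMap
  set p : Y → Quotient (fiberSetoid g M) := Quotient.mk (fiberSetoid g M) with hp
  have hpeq : ∀ a b : Y, p a = p b → (a = b ∨ (g a = g b ∧ g a ∉ M)) :=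
    fun a b h => Quotient.exact h
  have hpeq' : ∀ a b : Y, (a = b ∨ (g a = g b ∧ g a ∉ M)) → p a = p b :=
    fun a b h => Quotient.sound h
  have hpcont : Continuous p := continuous_quot_mk
  have hpopen : ∀ V : Set Y, IsOpen V →
      (∀ a ∈ V, ∀ b : Y, g b = g a → g a ∉ M → b ∈ V) → IsOpen (p '' V) := by
    intro V hV hsat
    have hsatur : p ⁻¹' (p '' V) = V := by
      ext a
      constructor
      · rintro ⟨b, hbV, hba⟩
        rcases hpeq b a hba with rfl | ⟨hgba, hbM⟩
        · exact hbV
        · exact hsat b hbV a hgba.symm hbM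
      · exact fun h => ⟨a, h, rfl⟩
    have h2 : IsOpen (p ⁻¹' (p '' V)) := by rw [hsatur]; exact hV
    exact isQuotientMap_quot_mk.isOpen_preimage.mp h2
  refine ⟨hpcont.comp hfc, ?_, ?_⟩
  · intro w
    induction w using Quotient.ind with
    | _ y =>
      obtain ⟨x, hx⟩ := hfs y
      exact ⟨x, by show p (f x) = p y; rw [hx]⟩
  · intro w
    induction w using Quotient.ind with
    | _ y =>
    intro s U hUo hUcov
    set T : Set (Quotient (fiberSetoid g M)) :=
      {p y} ∪ ⋃ i, smallImage (p ∘ f) (U i) with hT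
    show T ∈ nhds (p y)
    -- two small helper facts about smallImage of p ∘ f
    have hsmall1 : ∀ (a : Y) (i : Fin s), g a ∉ (g ∘ f) '' (U i)ᶜ →
        p a ∈ smallImage (p ∘ f) (U i) := by
      intro a i hga
      simp only [smallImage, mem_compl_iff]
      rintro ⟨x, hxU, hxe⟩
      rcases hpeq (f x) a hxe with rfl | ⟨hge, _⟩
      · exact hga ⟨x, hxU, rfl⟩
      · exact hga ⟨x, hxU, hge⟩
    have hsmall2 : ∀ (a : Y) (i : Fin s), g a ∈ M → a ∉ f '' (U i)ᶜ →
        p a ∈ smallImage (p ∘ f) (U i) := by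
      intro a i haM ha
      simp only [smallImage, mem_compl_iff]
      rintro ⟨x, hxU, hxe⟩
      rcases hpeq (f x) a hxe with rfl | ⟨hge, hgM⟩
      · exact ha ⟨x, hxU, rfl⟩
      · exact hgM (by rwa [hge])
    suffices hV : ∃ V : Set Y, IsOpen V ∧ y ∈ V ∧
        (∀ a ∈ V, ∀ b : Y, g b = g a → g a ∉ M → b ∈ V) ∧
        (∀ a ∈ V, p a ∈ T) by
      obtain ⟨V, hVo, hyV, hVsat, hVsub⟩ := hV
      exact mem_nhds_iff.mpr ⟨p '' V, by rintro _ ⟨a, haV, rfl⟩; exact hVsub a haV,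
        hpopen V hVo hVsat, ⟨y, hyV, rfl⟩⟩
    by_cases hzM : g y ∈ M
    · -- hard case: the class of y is a singleton
      rcases Nat.eq_zero_or_pos s with rfl | hs
      · obtain ⟨x, hx⟩ := hfs y
        have hx2 : x ∈ ⋃ i : Fin 0, U i := hUcov (by show p (f x) = p y; rw [hx])
        simp at hx2
      -- the fiber of p ∘ f over p y is f ⁻¹' {y}
      have hfib : f ⁻¹' {y} ⊆ ⋃ i, U i := by
        intro x hx
        apply hUcov
        show p (f x) = p y
        rw [show f x = y from hx]
      -- shrink the cover
      obtain ⟨P, hPcov, hPo, hPcl⟩ := exists_subset_iUnion_closure_subset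
        (isClosed_singleton.preimage hfc) hUo (fun x _ => Set.toFinite _) hfib
      -- W : neighborhood of y whose fibers lie in ⋃ P
      set W : Set Y := (f '' (⋃ i, P i)ᶜ)ᶜ with hWdef
      have hWo : IsOpen W := (hfcm _ (isOpen_iUnion hPo).isClosed_compl).isOpen_compl
      have hyW : y ∈ W := by
        rintro ⟨x, hxnP, hxy⟩
        exact hxnP (hPcov hxy)
      have hWfib : ∀ y' ∈ W, ∀ x : X, f x = y' → x ∈ ⋃ i, P i := by
        intro y' hy' x hx
        by_contra hxn
        exact hy' ⟨x, hxn, hx⟩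
      -- W₀ from full closedness of f at y
      obtain ⟨W₀, hW₀sub, hW₀o, hyW₀⟩ := mem_nhds_iff.mp (hff y s U hUo hfib)
      set W₃ : Set Y := W₀ ∩ W with hW₃def
      have hW₃o : IsOpen W₃ := hW₀o.inter hWo
      have hyW₃ : y ∈ W₃ := ⟨hyW₀, hyW⟩
      obtain ⟨W₄, hW₄o, hyW₄s, hW₄cl⟩ := normal_exists_closure_subset isClosed_singleton hW₃o
        (singleton_subset_iff.mpr hyW₃)
      have hyW₄ : y ∈ W₄ := hyW₄s rfl
      set G : Set Y := (closure W₄)ᶜ with hGdef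
      have hGo : IsOpen G := by rw [hGdef]; exact isClosed_closure.isOpen_compl
      -- full closedness of g at g y with the cover {W₃, G}
      have hgcov : g ⁻¹' {g y} ⊆ ⋃ i : Fin 2, (![W₃, G]) i := by
        intro a _
        by_cases hc : a ∈ closure W₄
        · exact mem_iUnion.2 ⟨0, hW₄cl hc⟩
        · exact mem_iUnion.2 ⟨1, hc⟩
      obtain ⟨O₂, hO₂sub, hO₂o, hzO₂⟩ := mem_nhds_iff.mp (hgg (g y) 2 ![W₃, G]
        (by
          intro i
          fin_cases i
          · simpa using hW₃o
          · simpa using hGo) hgcov)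
      -- The finite exceptional set coming from full closedness of g ∘ f
      set KZ : Set Z := ⋃ (a : Fin s) (b : Fin s) (c : Fin s),
        ((g ∘ f) '' (closure (P a) ∩ (U b)ᶜ)) ∩ ((g ∘ f) '' (closure (P c) ∩ (U a)ᶜ)) with hKZdef
      have hKZfin : KZ.Finite := by
        refine Set.finite_iUnion fun a => Set.finite_iUnion fun b => Set.finite_iUnion fun c => ?_
        refine fc_finite_inter hgfc hgff (isClosed_closure.inter (hUo b).isClosed_compl)
          (isClosed_closure.inter (hUo a).isClosed_compl) ?_
        intro x hx1 hx2
        exact hx2.2 (hPcl a hx1.1)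
      -- pigeonhole: fibers inside W that meet every (U i)ᶜ give points of KZ
      have pigeon : ∀ z' : Z, (∀ b : Y, g b = z' → b ∈ W) →
          (∀ i : Fin s, z' ∈ (g ∘ f) '' (U i)ᶜ) → z' ∈ KZ := by
        intro z' hfibW hBad
        obtain ⟨x₀, hx₀U, hx₀e⟩ := hBad ⟨0, hs⟩
        obtain ⟨a, hx₀P⟩ := mem_iUnion.1 (hWfib (f x₀) (hfibW _ hx₀e) x₀ rfl)
        obtain ⟨x₁, hx₁U, hx₁e⟩ := hBad a
        obtain ⟨c, hx₁P⟩ := mem_iUnion.1 (hWfib (f x₁) (hfibW _ hx₁e) x₁ rfl)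
        refine mem_iUnion.2 ⟨a, mem_iUnion.2 ⟨⟨0, hs⟩, mem_iUnion.2 ⟨c, ?_⟩⟩⟩
        exact ⟨⟨x₀, ⟨subset_closure hx₀P, hx₀U⟩, hx₀e⟩,
          ⟨x₁, ⟨subset_closure hx₁P, hx₁U⟩, hx₁e⟩⟩
      set O₃ : Set Z := O₂ ∩ (KZ \ {g y})ᶜ with hO₃def
      have hO₃o : IsOpen O₃ := hO₂o.inter (hKZfin.diff : (KZ \ {g y}).Finite).isClosed.isOpen_compl
      have hzO₃ : g y ∈ O₃ := ⟨hzO₂, fun hc => hc.2 rfl⟩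
      set SS : Set Z := ((g '' W₃ᶜ)ᶜ ∩ O₃) \ (KZ ∪ {g y}) with hSSdef
      have hSSo : IsOpen SS := (((hgcm _ hW₃o.isClosed_compl).isOpen_compl).inter hO₃o).sdiff
        (hKZfin.union (finite_singleton _)).isClosed
      set V : Set Y := (W₄ ∩ g ⁻¹' O₃) ∪ g ⁻¹' SS with hVdef
      have hVo : IsOpen V := (hW₄o.inter (hO₃o.preimage hgc)).union (hSSo.preimage hgc)
      have hyV : y ∈ V := Or.inl ⟨hyW₄, hzO₃⟩
      -- key: points of V outside g ⁻¹' M have g-image in SS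
      have hkey : ∀ a ∈ V, g a ∉ M → g a ∈ SS := by
        intro a haV haM
        rcases haV with ⟨haW₄, haO₃⟩ | haSS
        · have haO₂ : g a ∈ O₂ := haO₃.1
          rcases hO₂sub haO₂ with h1 | h1
          · exact absurd (show g a ∈ M by rw [show g a = g y from h1]; exact hzM) haM
          · rw [mem_iUnion] at h1
            obtain ⟨i, hi⟩ := h1
            fin_cases i
            · -- g a ∈ smallImage g W₃
              have hi' : g a ∉ g '' W₃ᶜ := by simpa [smallImage] using hi
              have hane : g a ≠ g y := fun he => haM (by rw [he]; exact hzM)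
              refine ⟨⟨hi', haO₃⟩, ?_⟩
              rintro (hK | hsing)
              · exact haO₃.2 ⟨hK, hane⟩
              · exact hane hsing
            · -- g a ∈ smallImage g G : whole fiber in G, but a ∈ W₄ ⊆ closure W₄
              exfalso
              have hi' : g a ∉ g '' Gᶜ := by simpa [smallImage] using hi
              have haG : a ∈ G := by
                by_contra hn
                exact hi' ⟨a, hn, rfl⟩
              exact haG (subset_closure haW₄)
        · exact haSS
      refine ⟨V, hVo, hyV, ?_, ?_⟩
      · intro a haV b hba haM
        exact Or.inr (show g b ∈ SS by rw [hba]; exact hkey a haV haM)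
      · intro a haV
        by_cases hay : a = y
        · subst hay
          exact Or.inl rfl
        by_cases haM : g a ∈ M
        · -- a is in W₃ ⊆ W₀, use full closedness of f
          have haW₃ : a ∈ W₃ := by
            rcases haV with ⟨haW₄, _⟩ | haSS
            · exact hW₄cl (subset_closure haW₄)
            · by_contra hn
              exact haSS.1.1 ⟨a, hn, rfl⟩
          rcases hW₀sub haW₃.1 with h1 | h1
          · exact absurd h1 hay
          · rw [mem_iUnion] at h1
            obtain ⟨i, hi⟩ := h1
            exact Or.inr (mem_iUnion.2 ⟨i, hsmall2 a i haM hi⟩)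
        · -- g a ∉ M : use pigeonhole
          have haSS := hkey a haV haM
          have hfibW : ∀ b : Y, g b = g a → b ∈ W := by
            intro b hb
            have hbW₃ : b ∈ W₃ := by
              by_contra hn
              exact haSS.1.1 ⟨b, hn, hb⟩
            exact hbW₃.2
          have hnK : g a ∉ KZ := fun hc => haSS.2 (Or.inl hc)
          have hex : ∃ i : Fin s, g a ∉ (g ∘ f) '' (U i)ᶜ := by
            by_contra hc
            push_neg at hc
            exact hnK (pigeon (g a) hfibW hc)
          obtain ⟨i, hi⟩ := hex
          exact Or.inr (mem_iUnion.2 ⟨i, hsmall1 a i hi⟩)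
    · -- easy case: g y ∉ M, the fiber of p ∘ f over p y is (g ∘ f) ⁻¹' {g y}
      have hcov : (g ∘ f) ⁻¹' {g y} ⊆ ⋃ i, U i := by
        intro x hx
        apply hUcov
        have hx' : g (f x) = g y := hx
        show p (f x) = p y
        exact hpeq' _ _ (Or.inr ⟨hx', by rw [hx']; exact hzM⟩)
      obtain ⟨O, hOsub, hOo, hzO⟩ := mem_nhds_iff.mp (hgff (g y) s U hUo hcov)
      refine ⟨g ⁻¹' O, hOo.preimage hgc, hzO, ?_, ?_⟩
      · intro a ha b hba _
        show g b ∈ O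
        rw [hba]; exact ha
      · intro a ha
        rcases hOsub ha with h1 | h1
        · left
          have h1' : g a = g y := h1
          show p a = p y
          exact hpeq' _ _ (Or.inr ⟨h1', by rw [h1']; exact hzM⟩)
        · right
          rw [mem_iUnion] at h1 ⊢
          obtain ⟨i, hi⟩ := h1
          have hi' : g a ∉ (g ∘ f) '' (U i)ᶜ := hi
          exact ⟨i, hsmall1 a i hi'⟩
end

section
/- Let X = lim← S be the limit of a well-ordered continuous inverse system S = {X_α, π^β_α : α ≤ β < γ} of Hausdorff compacta, let α₀ < γ be a limit ordinal, let f ∈ C(X), and let x ∈ X_{α₀}. Then π_{α₀}⁻¹(x) = ⋂_{β < α₀} π_β⁻¹(π^{α₀}_β(x)), and osc_{π_β⁻¹(π^{α₀}_β(x))} f converges to osc_{π_{α₀}⁻¹(x)} f as β increases to α₀ (i.e., for every δ > 0 there exists β₀ < α₀ such that |osc_{π_β⁻¹(π^{α₀}_β(x))} f − osc_{π_{α₀}⁻¹(x)} f| < δ for all β ∈ [β₀, α₀)). -/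
open Set Topology

/-- The oscillation of a real-valued function on a set: `sup {f a - f b : a, b ∈ A}`. -/
noncomputable def osc {X : Type*} (f : X → ℝ) (A : Set X) : ℝ :=
  sSup ((fun p : X × X => f p.1 - f p.2) '' (A ×ˢ A))

/-- A well-ordered inverse system of Hausdorff compacta indexed by the ordinals below `γ`,
with `X 0` a singleton and continuous surjective bonding maps `π : X β → X α` (`α ≤ β < γ`). -/
structure InvSystemAux (γ : Ordinal) where
  X : Ordinal → Type
  [topo : ∀ α, TopologicalSpace (X α)]
  compact : ∀ α, α < γ → CompactSpace (X α)
  t2 : ∀ α, α < γ → T2Space (X α)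
  zero_nonempty : Nonempty (X 0)
  zero_subsingleton : Subsingleton (X 0)
  π : ∀ {α β : Ordinal}, α ≤ β → X β → X α
  π_cont : ∀ {α β : Ordinal} (h : α ≤ β), β < γ → Continuous (π h)
  π_surj : ∀ {α β : Ordinal} (h : α ≤ β), β < γ → Function.Surjective (π h)
  π_id : ∀ {α : Ordinal} (h : α ≤ α) (x : X α), π h x = x
  π_comp : ∀ {α β δ : Ordinal} (h1 : α ≤ β) (h2 : β ≤ δ) (x : X δ),
    π h1 (π h2 x) = π (h1.trans h2) x

attribute [instance] InvSystemAux.topo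

/-- The space of threads of the system below level `α` (so `S.lim γ` is the limit of the
system, a subspace of the product `∏_{β<γ} X β`). -/
def InvSystemAux.lim {γ : Ordinal} (S : InvSystemAux γ) (α : Ordinal) : Type 1 :=
  {p : ∀ β : Set.Iio α, S.X β // ∀ (β δ : Set.Iio α) (h : (β : Ordinal) ≤ δ), S.π h (p δ) = p β}

instance {γ : Ordinal} (S : InvSystemAux γ) (α : Ordinal) : TopologicalSpace (S.lim α) :=
  instTopologicalSpaceSubtype

/-- The canonical map from `X α` to the space of threads below `α`. -/
def InvSystemAux.toLim {γ : Ordinal} (S : InvSystemAux γ) (α : Ordinal) (x : S.X α) :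
    S.lim α :=
  ⟨fun β => S.π β.2.le x, fun _ δ h => S.π_comp h δ.2.le x⟩

/-- The limit projection from the limit of the system onto the level `α < γ`. -/
def InvSystemAux.proj {γ : Ordinal} (S : InvSystemAux γ) (α : Ordinal) (h : α < γ) :
    S.lim γ → S.X α :=
  fun p => p.1 ⟨α, h⟩

/-- A well-ordered continuous inverse system of Hausdorff compacta: at every limit ordinal
`α < γ` the canonical map from `X α` to the inverse limit of the levels below `α` is a
homeomorphism. -/
structure InvSystem (γ : Ordinal) extends InvSystemAux γ where
  cont_limit : ∀ (α : Ordinal), α < γ → (α ≠ 0 ∧ ∀ a < α, Order.succ a < α) → IsHomeomorph (toInvSystemAux.toLim α)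

/-- An inverse system is F-decomposable if all its bonding maps are fully closed. -/
def InvSystem.FDecomposable {γ : Ordinal} (S : InvSystem γ) : Prop :=
  ∀ {α β : Ordinal} (h : α ≤ β), β < γ → FullyClosed (S.π h)

/-- Let `X` be the limit of a well-ordered continuous inverse system of Hausdorff
compacta, `α₀ < γ` a limit ordinal, `f ∈ C(X)` and `x ∈ X_{α₀}`. Then
`π_{α₀}⁻¹(x) = ⋂_{β<α₀} π_β⁻¹(π^{α₀}_β(x))` and `osc_{π_β⁻¹(π^{α₀}_β(x))} f` converges
to `osc_{π_{α₀}⁻¹(x)} f` as `β ↑ α₀`. -/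
theorem stmt15 {γ : Ordinal} (S : InvSystem γ) (α₀ : Ordinal) (hα₀γ : α₀ < γ)
    (hlim : α₀ ≠ 0 ∧ ∀ a < α₀, Order.succ a < α₀) (f : S.lim γ → ℝ) (hf : Continuous f) (x : S.X α₀) :
    (S.proj α₀ hα₀γ ⁻¹' {x} =
      ⋂ (β : Ordinal) (hβ : β < α₀), S.proj β (hβ.trans hα₀γ) ⁻¹' {S.π hβ.le x}) ∧
    ∀ δ > (0 : ℝ), ∃ β₀ < α₀, ∀ (β : Ordinal), β₀ ≤ β → ∀ hβ : β < α₀,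
      |osc f (S.proj β (hβ.trans hα₀γ) ⁻¹' {S.π hβ.le x}) -
        osc f (S.proj α₀ hα₀γ ⁻¹' {x})| < δ := by
  -- Part 1: the fiber over `x` is the intersection of the fibers below `α₀`.
  have h1 : S.proj α₀ hα₀γ ⁻¹' {x} =
      ⋂ (β : Ordinal) (hβ : β < α₀), S.proj β (hβ.trans hα₀γ) ⁻¹' {S.π hβ.le x} := by
    ext p
    simp only [mem_preimage, mem_singleton_iff, mem_iInter]
    constructor
    · intro hp β hβ
      have h2 := p.2 ⟨β, hβ.trans hα₀γ⟩ ⟨α₀, hα₀γ⟩ hβ.le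
      calc S.proj β (hβ.trans hα₀γ) p = S.π hβ.le (p.1 ⟨α₀, hα₀γ⟩) := h2.symm
        _ = S.π hβ.le x := by rw [show p.1 ⟨α₀, hα₀γ⟩ = x from hp]
    · intro hp
      have hinj := (S.cont_limit α₀ hα₀γ hlim).bijective.injective
      apply hinj
      apply Subtype.ext
      funext β
      show S.π β.2.le (S.proj α₀ hα₀γ p) = S.π β.2.le x
      have h2 : S.π β.2.le (p.1 ⟨α₀, hα₀γ⟩) = p.1 ⟨↑β, β.2.trans hα₀γ⟩ :=
        p.2 ⟨↑β, β.2.trans hα₀γ⟩ ⟨α₀, hα₀γ⟩ β.2.le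
      exact h2.trans (hp β β.2)
  refine ⟨h1, ?_⟩
  -- Topological setup
  haveI : ∀ β : Set.Iio γ, CompactSpace (S.X ↑β) := fun β => S.compact β β.2
  have hclosed : IsClosed {p : ∀ β : Set.Iio γ, S.X ↑β |
      ∀ (β δ : Set.Iio γ) (h : (β : Ordinal) ≤ δ), S.π h (p δ) = p β} := by
    have heq : {p : ∀ β : Set.Iio γ, S.X ↑β |
        ∀ (β δ : Set.Iio γ) (h : (β : Ordinal) ≤ δ), S.π h (p δ) = p β} =
        ⋂ (β : Set.Iio γ) (δ : Set.Iio γ) (h : (β : Ordinal) ≤ δ),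
          {p : ∀ β : Set.Iio γ, S.X ↑β | S.π h (p δ) = p β} := by
      ext p; simp only [mem_setOf_eq, mem_iInter]
    rw [heq]
    refine isClosed_iInter fun β => isClosed_iInter fun δ' => isClosed_iInter fun h => ?_
    haveI := S.t2 β β.2
    exact isClosed_eq ((S.π_cont h δ'.2).comp (continuous_apply δ')) (continuous_apply β)
  haveI : CompactSpace (S.lim γ) := isCompact_iff_compactSpace.mp hclosed.isCompact
  have hcont : ∀ (β : Ordinal) (h : β < γ), Continuous (S.proj β h) := fun β h =>
    (continuous_apply (⟨β, h⟩ : Set.Iio γ)).comp continuous_subtype_val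
  -- The family of fibers below `α₀`
  set B : Set.Iio α₀ → Set (S.lim γ) :=
    fun β => S.proj ↑β (β.2.trans hα₀γ) ⁻¹' {S.π β.2.le x} with hBdef
  have hBclosed : ∀ β : Set.Iio α₀, IsClosed (B β) := by
    intro β
    haveI := S.t2 ↑β (β.2.trans hα₀γ)
    exact isClosed_singleton.preimage (hcont ↑β (β.2.trans hα₀γ))
  have hBanti : ∀ β δ' : Set.Iio α₀, (β : Ordinal) ≤ δ' → B δ' ⊆ B β := by
    intro β δ' h p hp
    simp only [hBdef, mem_preimage, mem_singleton_iff] at hp ⊢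
    have h2 : S.π h (p.1 ⟨↑δ', δ'.2.trans hα₀γ⟩) = p.1 ⟨↑β, β.2.trans hα₀γ⟩ :=
      p.2 ⟨↑β, β.2.trans hα₀γ⟩ ⟨↑δ', δ'.2.trans hα₀γ⟩ h
    calc S.proj ↑β (β.2.trans hα₀γ) p = S.π h (p.1 ⟨↑δ', δ'.2.trans hα₀γ⟩) := h2.symm
      _ = S.π h (S.π δ'.2.le x) := by rw [show p.1 ⟨↑δ', δ'.2.trans hα₀γ⟩ = S.π δ'.2.le x from hp]
      _ = S.π β.2.le x := S.π_comp h δ'.2.le x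
  have hinterB : (⋂ β : Set.Iio α₀, B β) = S.proj α₀ hα₀γ ⁻¹' {x} := by
    rw [h1]
    ext p
    simp only [mem_iInter, Subtype.forall]
    exact ⟨fun h β hβ => h β hβ, fun h β hβ => h β hβ⟩
  have hAsubB : ∀ β : Set.Iio α₀, S.proj α₀ hα₀γ ⁻¹' {x} ⊆ B β := by
    intro β
    rw [← hinterB]
    exact iInter_subset _ β
  haveI : Nonempty (Set.Iio α₀) := ⟨⟨0, (zero_le (a := α₀)).lt_of_ne (Ne.symm hlim.1)⟩⟩
  have hAclosed : IsClosed (S.proj α₀ hα₀γ ⁻¹' {x}) := by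
    haveI := S.t2 α₀ hα₀γ
    exact isClosed_singleton.preimage (hcont α₀ hα₀γ)
  intro δ hδ
  by_cases hAne : (S.proj α₀ hα₀γ ⁻¹' {x}).Nonempty
  · -- Nonempty fiber: use extreme values of `f` on the fiber.
    have hAcomp : IsCompact (S.proj α₀ hα₀γ ⁻¹' {x}) := hAclosed.isCompact
    obtain ⟨a, haA, hamax⟩ := hAcomp.exists_isMaxOn hAne hf.continuousOn
    obtain ⟨b, hbA, hbmin⟩ := hAcomp.exists_isMinOn hAne hf.continuousOn
    have hamax' : ∀ p ∈ S.proj α₀ hα₀γ ⁻¹' {x}, f p ≤ f a := fun p hp => hamax hp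
    have hbmin' : ∀ p ∈ S.proj α₀ hα₀γ ⁻¹' {x}, f b ≤ f p := fun p hp => hbmin hp
    have hba : f b ≤ f a := hamax' b hbA
    have hoscA : osc f (S.proj α₀ hα₀γ ⁻¹' {x}) = f a - f b := by
      apply le_antisymm
      · apply Real.sSup_le
        · rintro y ⟨⟨p, q⟩, ⟨hp, hq⟩, rfl⟩
          have := hamax' p hp
          have := hbmin' q hq
          simp only
          linarith
        · linarith
      · apply le_csSup
        · exact ⟨f a - f b, by rintro y ⟨⟨p, q⟩, ⟨hp, hq⟩, rfl⟩
                               have := hamax' p hp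
                               have := hbmin' q hq
                               simp only
                               linarith⟩
        · exact ⟨(a, b), ⟨haA, hbA⟩, rfl⟩
    set U : Set (S.lim γ) := f ⁻¹' (Set.Ioo (f b - δ/4) (f a + δ/4)) with hUdef
    have hUopen : IsOpen U := isOpen_Ioo.preimage hf
    have hAU : S.proj α₀ hα₀γ ⁻¹' {x} ⊆ U := by
      intro p hp
      refine ⟨?_, ?_⟩
      · have := hbmin' p hp; linarith
      · have := hamax' p hp; linarith
    have hdir : Directed (· ⊇ ·) (fun β : Set.Iio α₀ => B β ∩ Uᶜ) := by
      intro β δ'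
      rcases le_total β δ' with h | h
      · exact ⟨δ', inter_subset_inter_left _ (hBanti β δ' h), subset_rfl⟩
      · exact ⟨β, subset_rfl, inter_subset_inter_left _ (hBanti δ' β h)⟩
    have hint : (Set.univ ∩ ⋂ β : Set.Iio α₀, (B β ∩ Uᶜ)) = ∅ := by
      rw [Set.univ_inter, ← Set.iInter_inter, hinterB]
      rw [Set.eq_empty_iff_forall_notMem]
      rintro p ⟨hp, hpU⟩
      exact hpU (hAU hp)
    obtain ⟨β₀, hβ₀⟩ := CompactSpace.isCompact_univ.elim_directed_family_closed
      (fun β : Set.Iio α₀ => B β ∩ Uᶜ)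
      (fun β => (hBclosed β).inter hUopen.isClosed_compl) hint hdir
    rw [Set.univ_inter, Set.eq_empty_iff_forall_notMem] at hβ₀
    have hBU : B β₀ ⊆ U := by
      intro p hp
      by_contra hpU
      exact hβ₀ p ⟨hp, hpU⟩
    refine ⟨↑β₀, β₀.2, ?_⟩
    intro β hβ₀β hβ
    have hsub : B ⟨β, hβ⟩ ⊆ B β₀ := hBanti β₀ ⟨β, hβ⟩ hβ₀β
    have hsubU : B ⟨β, hβ⟩ ⊆ U := hsub.trans hBU
    have hoscB_le : osc f (B ⟨β, hβ⟩) ≤ f a - f b + δ/2 := by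
      apply Real.sSup_le
      · rintro y ⟨⟨p, q⟩, ⟨hp, hq⟩, rfl⟩
        have h3 := hsubU hp
        have h4 := hsubU hq
        simp only [hUdef, mem_preimage, mem_Ioo] at h3 h4
        simp only
        linarith [h3.2, h4.1]
      · linarith
    have hoscB_ge : f a - f b ≤ osc f (B ⟨β, hβ⟩) := by
      apply le_csSup
      · refine ⟨f a - f b + δ/2, ?_⟩
        rintro y ⟨⟨p, q⟩, ⟨hp, hq⟩, rfl⟩
        have h3 := hsubU hp
        have h4 := hsubU hq
        simp only [hUdef, mem_preimage, mem_Ioo] at h3 h4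
        simp only
        linarith [h3.2, h4.1]
      · exact ⟨(a, b), ⟨hAsubB ⟨β, hβ⟩ haA, hAsubB ⟨β, hβ⟩ hbA⟩, rfl⟩
    have hBeq : osc f (S.proj β (hβ.trans hα₀γ) ⁻¹' {S.π hβ.le x}) = osc f (B ⟨β, hβ⟩) := rfl
    rw [hBeq, hoscA, abs_sub_lt_iff]
    constructor <;> linarith
  · -- Empty fiber: eventually all fibers are empty.
    have hAempty : S.proj α₀ hα₀γ ⁻¹' {x} = ∅ := not_nonempty_iff_eq_empty.mp hAne
    have hdir : Directed (· ⊇ ·) B := by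
      intro β δ'
      rcases le_total β δ' with h | h
      · exact ⟨δ', hBanti β δ' h, subset_rfl⟩
      · exact ⟨β, subset_rfl, hBanti δ' β h⟩
    have hint : (Set.univ ∩ ⋂ β : Set.Iio α₀, B β) = ∅ := by
      rw [Set.univ_inter, hinterB, hAempty]
    obtain ⟨β₀, hβ₀⟩ := CompactSpace.isCompact_univ.elim_directed_family_closed
      B hBclosed hint hdir
    rw [Set.univ_inter] at hβ₀
    refine ⟨↑β₀, β₀.2, ?_⟩
    intro β hβ₀β hβ
    have hBempty : B ⟨β, hβ⟩ = ∅ := by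
      rw [← Set.subset_empty_iff, ← hβ₀]
      exact hBanti β₀ ⟨β, hβ⟩ hβ₀β
    have hBeq : (S.proj β (hβ.trans hα₀γ) ⁻¹' {S.π hβ.le x}) = B ⟨β, hβ⟩ := rfl
    rw [hBeq, hBempty, hAempty]
    simp only [osc, Set.empty_prod, Set.image_empty, Real.sSup_empty, sub_zero, abs_zero]
    exact hδ
end
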